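/- Let f be a Rademacher random multiplicative function. For a single prime p with p ≥ 100(1+max{α²,β²}) and reals α,β ≥ 0, σ with |σ| ≤ 1/log p, t₁, t₂, one has E[|1 + f(p)p^{−(1/2+σ+it₁)}|^{2α} |1 + f(p)p^{−(1/2+σ+it₂)}|^{2β}] = exp( (α² + β² + (α²−α)cos(2t₁ log p) + (β²−β)cos(2t₂ log p) + 2αβ(cos((t₁+t₂)log p) + cos((t₁−t₂)log p)))/p^{1+2σ} + O(max{α,β,α³,β³}/p^{3/2+3σ}) ). -/

import Mathlib

open MeasureTheory

/-- `ε` is a Rademacher random variable: it takes the values `±1` with probability `1/2`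
each. -/
def IsRademacherRV {Ω : Type*} [MeasurableSpace Ω] (μ : Measure Ω) (ε : Ω → ℝ) : Prop :=
  Measurable ε ∧ μ {ω | ε ω = 1} = 1 / 2 ∧ μ {ω | ε ω = -1} = 1 / 2

/-!
Since `f(p) = ±1` with probability `1/2`, the expectation is the average `(e^{u₊} + e^{u₋})/2`
with `u± = α log(1 ± 2rc₁ + r²) + β log(1 ± 2rc₂ + r²)`, where `r = p^{-(1/2+σ)}` and
`cᵢ = cos(tᵢ log p)`, and its logarithm is `(u₊ + u₋)/2 + log cosh((u₊ - u₋)/2)`.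
Expanding `log(1 + x) = x - x²/2 + O(x³)`, the even part of `log(1 + 2rc + r²)` is
`r²(1 - 2c²) + O(r³)` and its odd part is `2rc + O(r³)`; with `log cosh x = x²/2 + O(x⁴)` this gives
`r²(α(1 - 2c₁²) + β(1 - 2c₂²) + 2(αc₁ + βc₂)²)`, which is the stated exponent after
`cos 2θ = 2cos²θ - 1` and `cos(a + b) + cos(a - b) = 2 cos a cos b`. The hypothesis on `p` and `σ`
makes `r`, `rα`, `rβ ≤ 3/10`, so every error term is `O(max(α, β, α³, β³) r³)`.
-/

namespace Real

lemma abs_log_one_add_sub_le {x : ℝ} (hx : |x| ≤ 3 / 4) :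
    |log (1 + x) - (x - x ^ 2 / 2)| ≤ 4 * |x| ^ 3 := by
  have h := abs_log_sub_add_sum_range_le (x := -x) (by rw [abs_neg]; linarith) 2
  norm_num [Finset.sum_range_succ] at h
  calc |log (1 + x) - (x - x ^ 2 / 2)| = |-x + x ^ 2 / 2 + log (1 + x)| := by congr 1; ring
    _ ≤ |x| ^ 3 / (1 - |x|) := h
    _ ≤ 4 * |x| ^ 3 := by
        rw [div_le_iff₀ (by linarith)]
        nlinarith [mul_nonneg (pow_nonneg (abs_nonneg x) 3) (sub_nonneg.2 hx)]

lemma one_add_sq_div_two_le_cosh (x : ℝ) : 1 + x ^ 2 / 2 ≤ cosh x := by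
  have hsinh : (x / 2) ^ 2 ≤ sinh (x / 2) ^ 2 := by
    rcases le_total 0 (x / 2) with h | h
    · exact pow_le_pow_left₀ h (self_le_sinh_iff.2 h) 2
    · nlinarith [sinh_le_self_iff.2 h]
  have := cosh_two_mul (x / 2)
  rw [mul_div_cancel₀ x two_ne_zero, cosh_sq'] at this
  nlinarith

lemma abs_log_cosh_sub_le (x : ℝ) : |log (cosh x) - x ^ 2 / 2| ≤ x ^ 4 / 4 := by
  have hupper : log (cosh x) ≤ x ^ 2 / 2 :=
    (log_le_iff_le_exp (cosh_pos x)).2 (cosh_le_exp_half_sq x)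
  have hlower : x ^ 2 / (2 + x ^ 2) ≤ log (cosh x) := by
    have h1 : 0 < 1 + x ^ 2 / 2 := by positivity
    calc x ^ 2 / (2 + x ^ 2) = 1 - (1 + x ^ 2 / 2)⁻¹ := by field_simp; ring
      _ ≤ log (1 + x ^ 2 / 2) := one_sub_inv_le_log_of_pos h1
      _ ≤ log (cosh x) := log_le_log h1 (one_add_sq_div_two_le_cosh x)
  have hgap : x ^ 2 / 2 - x ^ 2 / (2 + x ^ 2) ≤ x ^ 4 / 4 := by
    calc x ^ 2 / 2 - x ^ 2 / (2 + x ^ 2) = x ^ 4 / (2 * (2 + x ^ 2)) := by field_simp; ring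
      _ ≤ x ^ 4 / 4 := div_le_div_of_nonneg_left (by positivity) (by norm_num) (by nlinarith)
  rw [abs_le]; constructor <;> linarith

lemma log_exp_add_exp_div_two (a b : ℝ) :
    log ((exp a + exp b) / 2) = (a + b) / 2 + log (cosh ((a - b) / 2)) := by
  have : (exp a + exp b) / 2 = exp ((a + b) / 2) * cosh ((a - b) / 2) := by
    rw [cosh_eq, mul_div_assoc', mul_add, ← exp_add, ← exp_add]
    ring_nf
  rw [this, log_mul (exp_pos _).ne' (cosh_pos _).ne', log_exp]

end Real

open Real

section TwoPoint

variable {r c : ℝ}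

lemma abs_log_one_add_two_mul_add_sq_sub_le (hr0 : 0 ≤ r) (hr : r ≤ 3 / 10) (hc : |c| ≤ 1) :
    |log (1 + 2 * r * c + r ^ 2) - (2 * r * c + r ^ 2 - 2 * r ^ 2 * c ^ 2)| ≤ 64 * r ^ 3 := by
  rw [show 1 + 2 * r * c + r ^ 2 = 1 + (2 * r * c + r ^ 2) by ring]
  set x := 2 * r * c + r ^ 2
  have hxr : |x| ≤ 23 / 10 * r := by
    have : |2 * r * c| ≤ 2 * r := by
      rw [abs_mul, abs_of_nonneg (by positivity : (0 : ℝ) ≤ 2 * r)]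
      exact mul_le_of_le_one_right (by positivity) hc
    calc |x| ≤ |2 * r * c| + |r ^ 2| := abs_add_le _ _
      _ ≤ 23 / 10 * r := by rw [abs_of_nonneg (sq_nonneg r)]; nlinarith
  have htaylor := abs_log_one_add_sub_le (x := x) (by linarith)
  have hcube : |x| ^ 3 ≤ (23 / 10 * r) ^ 3 := pow_le_pow_left₀ (abs_nonneg x) hxr 3
  have hrest : |(x - x ^ 2 / 2) - (2 * r * c + r ^ 2 - 2 * r ^ 2 * c ^ 2)| ≤ 3 * r ^ 3 := by
    have hcr : |r ^ 3 * (2 * c + r / 2)| ≤ r ^ 3 * 3 := by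
      rw [abs_mul, abs_of_nonneg (by positivity)]
      refine mul_le_mul_of_nonneg_left ?_ (by positivity)
      calc |2 * c + r / 2| ≤ |2 * c| + |r / 2| := abs_add_le _ _
        _ ≤ 3 := by
          rw [abs_mul, abs_two, abs_of_nonneg (by positivity : (0 : ℝ) ≤ r / 2)]; linarith
    calc _ = |r ^ 3 * (2 * c + r / 2)| := by rw [← abs_neg]; congr 1; ring
      _ ≤ 3 * r ^ 3 := by linarith
  calc _ ≤ |log (1 + x) - (x - x ^ 2 / 2)|
        + |(x - x ^ 2 / 2) - (2 * r * c + r ^ 2 - 2 * r ^ 2 * c ^ 2)| := abs_sub_le _ _ _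
    _ ≤ 64 * r ^ 3 := by nlinarith

lemma abs_log_even_part_sub_le (hr0 : 0 ≤ r) (hr : r ≤ 3 / 10) (hc : |c| ≤ 1) :
    |(log (1 + 2 * r * c + r ^ 2) + log (1 + 2 * r * -c + r ^ 2)) / 2 - r ^ 2 * (1 - 2 * c ^ 2)|
      ≤ 64 * r ^ 3 := by
  have hplus := abs_le.1 (abs_log_one_add_two_mul_add_sq_sub_le hr0 hr hc)
  have hminus :=
    abs_le.1 (abs_log_one_add_two_mul_add_sq_sub_le hr0 hr (c := -c) (by rwa [abs_neg]))
  rw [abs_le]; constructor <;> nlinarith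

lemma abs_log_odd_part_sub_le (hr0 : 0 ≤ r) (hr : r ≤ 3 / 10) (hc : |c| ≤ 1) :
    |(log (1 + 2 * r * c + r ^ 2) - log (1 + 2 * r * -c + r ^ 2)) / 2 - 2 * r * c|
      ≤ 64 * r ^ 3 := by
  have hplus := abs_le.1 (abs_log_one_add_two_mul_add_sq_sub_le hr0 hr hc)
  have hminus :=
    abs_le.1 (abs_log_one_add_two_mul_add_sq_sub_le hr0 hr (c := -c) (by rwa [abs_neg]))
  rw [abs_le]; constructor <;> nlinarith

lemma abs_mul_add_mul_le {α β x y K : ℝ} (hα : 0 ≤ α) (hβ : 0 ≤ β) (hx : |x| ≤ K)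
    (hy : |y| ≤ K) : |α * x + β * y| ≤ (α + β) * K := by
  calc |α * x + β * y| ≤ α * |x| + β * |y| := by
        simpa only [abs_mul, abs_of_nonneg hα, abs_of_nonneg hβ] using abs_add_le (α * x) (β * y)
    _ ≤ (α + β) * K := by nlinarith

lemma abs_add_log_cosh_sub_le {s a a₀ d D : ℝ} (hr0 : 0 ≤ r) (hr : r ≤ 3 / 10) (hs : 0 ≤ s)
    (hrs : r * s ≤ 3 / 5) (ha : |a - a₀| ≤ s * (64 * r ^ 3)) (hd : |d - D| ≤ s * (64 * r ^ 3))
    (hD : |D| ≤ 2 * r * s) :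
    |a + log (cosh d) - (a₀ + D ^ 2 / 2)| ≤ 1000 * (s + s ^ 3) * r ^ 3 := by
  have hd' : |d - D| ≤ 6 * r * s := by
    nlinarith [mul_nonneg (mul_nonneg hs hr0) (by nlinarith : (0 : ℝ) ≤ 6 - 64 * r ^ 2)]
  have hdr : |d| ≤ 8 * r * s := by linarith [abs_sub_abs_le_abs_sub d D]
  have hcosh : |log (cosh d) - d ^ 2 / 2| ≤ 615 * s ^ 3 * r ^ 3 := by
    calc |log (cosh d) - d ^ 2 / 2| ≤ |d| ^ 4 / 4 := by
          simpa only [pow_abs, abs_of_nonneg (by positivity : 0 ≤ d ^ 4)]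
            using abs_log_cosh_sub_le d
      _ ≤ (8 * r * s) ^ 4 / 4 := by gcongr
      _ = 1024 * (r * s) * (s ^ 3 * r ^ 3) := by ring
      _ ≤ 615 * s ^ 3 * r ^ 3 := by nlinarith [pow_nonneg (mul_nonneg hs hr0) 3]
  have hsq : |(d ^ 2 - D ^ 2) / 2| ≤ 192 * s * r ^ 3 := by
    calc |(d ^ 2 - D ^ 2) / 2| = |d - D| * |d + D| / 2 := by
          rw [abs_div, abs_two, ← abs_mul]; ring_nf
      _ ≤ s * (64 * r ^ 3) * (10 * r * s) / 2 := by
          gcongr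
          linarith [abs_add_le d D]
      _ = 320 * (r * s) * (s * r ^ 3) := by ring
      _ ≤ 192 * s * r ^ 3 := by nlinarith [mul_nonneg hs (pow_nonneg hr0 3)]
  calc _ = |(a - a₀) + (log (cosh d) - d ^ 2 / 2) + (d ^ 2 - D ^ 2) / 2| := by ring_nf
    _ ≤ s * (64 * r ^ 3) + 615 * s ^ 3 * r ^ 3 + 192 * s * r ^ 3 := by
        grw [abs_add_le, abs_add_le, ha, hcosh, hsq]
    _ ≤ 1000 * (s + s ^ 3) * r ^ 3 := by
        nlinarith [mul_nonneg hs (pow_nonneg hr0 3),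
          mul_nonneg (pow_nonneg hs 3) (pow_nonneg hr0 3)]

variable {α β c₁ c₂ : ℝ}

lemma two_point_average_eq_exp (hα : 0 ≤ α) (hβ : 0 ≤ β) (hc₁ : |c₁| ≤ 1) (hc₂ : |c₂| ≤ 1)
    (hr0 : 0 ≤ r) (hr : r ≤ 3 / 10) (hrα : r * α ≤ 3 / 10) (hrβ : r * β ≤ 3 / 10) :
    ∃ E, |E| ≤ 1000 * ((α + β) + (α + β) ^ 3) * r ^ 3 ∧
      ((1 + 2 * r * c₁ + r ^ 2) ^ α * (1 + 2 * r * c₂ + r ^ 2) ^ β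
        + (1 + 2 * r * -c₁ + r ^ 2) ^ α * (1 + 2 * r * -c₂ + r ^ 2) ^ β) / 2
      = exp (r ^ 2 * (α * (1 - 2 * c₁ ^ 2) + β * (1 - 2 * c₂ ^ 2) + 2 * (α * c₁ + β * c₂) ^ 2)
          + E) := by
  have hrpow : ∀ c, |c| ≤ 1 → ∀ γ, (1 + 2 * r * c + r ^ 2) ^ γ
      = exp (γ * log (1 + 2 * r * c + r ^ 2)) := fun c hc γ => by
    rw [rpow_def_of_pos (by nlinarith [abs_le.1 hc]), mul_comm]
  rw [hrpow c₁ hc₁, hrpow c₂ hc₂, hrpow _ (by rwa [abs_neg]), hrpow _ (by rwa [abs_neg]),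
    ← exp_add, ← exp_add]
  set uPlus := α * log (1 + 2 * r * c₁ + r ^ 2) + β * log (1 + 2 * r * c₂ + r ^ 2)
  set uMinus := α * log (1 + 2 * r * -c₁ + r ^ 2) + β * log (1 + 2 * r * -c₂ + r ^ 2)
  refine ⟨(uPlus + uMinus) / 2 + log (cosh ((uPlus - uMinus) / 2))
    - r ^ 2 * (α * (1 - 2 * c₁ ^ 2) + β * (1 - 2 * c₂ ^ 2) + 2 * (α * c₁ + β * c₂) ^ 2), ?_, ?_⟩
  · have hmean : |(uPlus + uMinus) / 2 - r ^ 2 * (α * (1 - 2 * c₁ ^ 2) + β * (1 - 2 * c₂ ^ 2))|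
        ≤ (α + β) * (64 * r ^ 3) := by
      convert abs_mul_add_mul_le hα hβ (abs_log_even_part_sub_le hr0 hr hc₁)
        (abs_log_even_part_sub_le hr0 hr hc₂) using 2
      ring
    have hodd : |(uPlus - uMinus) / 2 - 2 * r * (α * c₁ + β * c₂)| ≤ (α + β) * (64 * r ^ 3) := by
      convert abs_mul_add_mul_le hα hβ (abs_log_odd_part_sub_le hr0 hr hc₁)
        (abs_log_odd_part_sub_le hr0 hr hc₂) using 2
      ring
    have hD : |2 * r * (α * c₁ + β * c₂)| ≤ 2 * r * (α + β) := by
      rw [abs_mul, abs_of_nonneg (by positivity : (0 : ℝ) ≤ 2 * r)]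
      simpa using mul_le_mul_of_nonneg_left (abs_mul_add_mul_le hα hβ hc₁ hc₂) (by positivity)
    convert abs_add_log_cosh_sub_le hr0 hr (by positivity) (by linarith) hmean hodd hD using 3
    ring
  · rw [add_sub_cancel, ← log_exp_add_exp_div_two, exp_log (by positivity)]

end TwoPoint

lemma IsRademacherRV.ae_eq_one_or_eq_neg_one {Ω : Type*} [MeasurableSpace Ω] {μ : Measure Ω}
    [IsProbabilityMeasure μ] {ε : Ω → ℝ} (hε : IsRademacherRV μ ε) :
    ∀ᵐ ω ∂μ, ε ω = 1 ∨ ε ω = -1 := by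
  obtain ⟨hm, h₁, h₂⟩ := hε
  have hdisj : Disjoint {ω | ε ω = 1} {ω | ε ω = -1} :=
    Set.disjoint_left.2 fun ω (h : ε ω = 1) (h' : ε ω = -1) => by linarith
  have hunion : μ ({ω | ε ω = 1} ∪ {ω | ε ω = -1}) = 1 := by
    rw [measure_union hdisj (hm (measurableSet_singleton _)), h₁, h₂, ENNReal.add_halves]
  exact (ae_iff_measure_eq ((hm (measurableSet_singleton _)).union
    (hm (measurableSet_singleton _))).nullMeasurableSet).2 (hunion.trans measure_univ.symm)

lemma IsRademacherRV.integral_comp {Ω : Type*} [MeasurableSpace Ω] {μ : Measure Ω}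
    [IsProbabilityMeasure μ] {ε : Ω → ℝ} (hε : IsRademacherRV μ ε) (g : ℝ → ℝ) :
    ∫ ω, g (ε ω) ∂μ = (g 1 + g (-1)) / 2 := by
  have hA : MeasurableSet {ω | ε ω = 1} := hε.1 (measurableSet_singleton 1)
  have hB : MeasurableSet {ω | ε ω = -1} := hε.1 (measurableSet_singleton (-1))
  have hsplit : (fun ω => g (ε ω)) =ᵐ[μ]
      fun ω => {ω | ε ω = 1}.indicator (fun _ => g 1) ω
        + {ω | ε ω = -1}.indicator (fun _ => g (-1)) ω := by
    filter_upwards [hε.ae_eq_one_or_eq_neg_one] with ω hω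
    rcases hω with h | h <;> norm_num [Set.indicator, h]
  rw [integral_congr_ae hsplit, integral_add ((integrable_const _).indicator hA)
    ((integrable_const _).indicator hB), integral_indicator_const _ hA,
    integral_indicator_const _ hB, measureReal_def, measureReal_def, hε.2.1, hε.2.2]
  norm_num
  ring

lemma norm_one_add_ofReal_mul_sq (e : ℝ) (w : ℂ) :
    ‖1 + (e : ℂ) * w‖ ^ 2 = 1 + 2 * e * w.re + e ^ 2 * ‖w‖ ^ 2 := by
  rw [Complex.sq_norm, Complex.sq_norm, Complex.normSq_apply, Complex.normSq_apply]
  simp only [Complex.add_re, Complex.add_im, Complex.one_re, Complex.one_im, Complex.re_ofReal_mul,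
    Complex.im_ofReal_mul]
  ring

lemma re_natCast_cpow_neg {p : ℕ} (hp : 0 < p) (s t : ℝ) :
    ((p : ℂ) ^ (-((s : ℂ) + Complex.I * t))).re = ((p : ℝ) ^ s)⁻¹ * cos (t * log p) := by
  have hp' : (0 : ℝ) < p := Nat.cast_pos.2 hp
  rw [Complex.cpow_def_of_ne_zero (Nat.cast_ne_zero.2 hp.ne'), ← Complex.natCast_log,
    Complex.exp_re, rpow_def_of_pos hp', ← exp_neg]
  simp only [Complex.mul_re, Complex.mul_im, Complex.neg_re, Complex.neg_im, Complex.add_re,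
    Complex.add_im, Complex.ofReal_re, Complex.ofReal_im, Complex.mul_re, Complex.I_re,
    Complex.I_im]
  rw [← cos_neg]
  ring_nf

lemma norm_natCast_cpow_neg {p : ℕ} (hp : 0 < p) (s t : ℝ) :
    ‖(p : ℂ) ^ (-((s : ℂ) + Complex.I * t))‖ = ((p : ℝ) ^ s)⁻¹ := by
  rw [Complex.norm_natCast_cpow_of_pos hp, ← rpow_neg (Nat.cast_nonneg p)]
  simp

lemma norm_one_add_mul_natCast_cpow_neg_rpow {p : ℕ} (hp : 0 < p) (e s t γ : ℝ) :
    ‖1 + (e : ℂ) * (p : ℂ) ^ (-((s : ℂ) + Complex.I * t))‖ ^ (2 * γ)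
      = (1 + 2 * ((p : ℝ) ^ s)⁻¹ * (e * cos (t * log p)) + e ^ 2 * (((p : ℝ) ^ s)⁻¹) ^ 2) ^ γ := by
  rw [rpow_mul (norm_nonneg _), rpow_two, norm_one_add_ofReal_mul_sq, re_natCast_cpow_neg hp,
    norm_natCast_cpow_neg hp]
  ring_nf

lemma inv_rpow_half_add_mul_le {p σ x : ℝ} (hp : 1 < p) (hσ : |σ| ≤ 1 / log p) (hx : 0 ≤ x)
    (hxp : 100 * x ^ 2 ≤ p) : (p ^ (1 / 2 + σ))⁻¹ * x ≤ 3 / 10 := by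
  have hp0 : 0 < p := by linarith
  have hlog : 0 < log p := log_pos hp
  have hpσ : exp (-1) ≤ p ^ σ := by
    rw [rpow_def_of_pos hp0, exp_le_exp]
    rw [le_div_iff₀ hlog] at hσ
    nlinarith [mul_nonneg (neg_le_iff_add_nonneg.1 (neg_abs_le σ)) hlog.le]
  have hsqrt : 10 * x ≤ sqrt p := le_sqrt_of_sq_le (by nlinarith)
  have he : exp (-1) * 3 ≥ 1 := by
    rw [exp_neg, ge_iff_le, ← div_eq_inv_mul, le_div_iff₀ (exp_pos 1), one_mul]
    exact exp_one_lt_three.le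
  rw [rpow_add hp0, ← sqrt_eq_rpow, inv_mul_le_iff₀ (by positivity)]
  nlinarith [sqrt_nonneg p, mul_le_mul_of_nonneg_left hpσ (sqrt_nonneg p)]

lemma add_add_pow_three_le_max {α β : ℝ} (hα : 0 ≤ α) (hβ : 0 ≤ β) :
    (α + β) + (α + β) ^ 3 ≤ 10 * max (max α β) (max (α ^ 3) (β ^ 3)) := by
  rcases le_total α β with h | h
  · rw [max_eq_right h, max_eq_right (pow_le_pow_left₀ hα h 3)]
    nlinarith [pow_le_pow_left₀ (by linarith) (show α + β ≤ 2 * β by linarith) 3,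
      le_max_left β (β ^ 3), le_max_right β (β ^ 3)]
  · rw [max_eq_left h, max_eq_left (pow_le_pow_left₀ hβ h 3)]
    nlinarith [pow_le_pow_left₀ (by linarith) (show α + β ≤ 2 * α by linarith) 3,
      le_max_left α (α ^ 3), le_max_right α (α ^ 3)]

lemma two_point_exponent_eq (α β t₁ t₂ L : ℝ) :
    α ^ 2 + β ^ 2 + (α ^ 2 - α) * cos (2 * t₁ * L) + (β ^ 2 - β) * cos (2 * t₂ * L)
      + 2 * α * β * (cos ((t₁ + t₂) * L) + cos ((t₁ - t₂) * L))
      = α * (1 - 2 * cos (t₁ * L) ^ 2) + β * (1 - 2 * cos (t₂ * L) ^ 2)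
        + 2 * (α * cos (t₁ * L) + β * cos (t₂ * L)) ^ 2 := by
  rw [mul_assoc 2 t₁, mul_assoc 2 t₂, cos_two_mul, cos_two_mul, add_mul t₁, sub_mul t₁, cos_add,
    cos_sub]
  ring

/-- single-prime two-point estimate, Rademacher case. For a Rademacher
random sign `f(p) = ε`, a prime `p ≥ 100(1 + max{α², β²})`, reals `α, β ≥ 0`, `σ` with
`|σ| ≤ 1/log p` and shifts `t₁, t₂`:
`E[|1 + f(p)p^{-(1/2+σ+it₁)}|^{2α} |1 + f(p)p^{-(1/2+σ+it₂)}|^{2β}]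
 = exp((α² + β² + (α²-α)cos(2t₁ log p) + (β²-β)cos(2t₂ log p)
    + 2αβ(cos((t₁+t₂)log p) + cos((t₁-t₂)log p)))/p^{1+2σ}
    + O(max{α,β,α³,β³}/p^{3/2+3σ}))`. -/
theorem rademacher_single_prime_estimate :
    ∃ C : ℝ, 0 < C ∧
      ∀ (Ω : Type) [MeasurableSpace Ω] (μ : Measure Ω), IsProbabilityMeasure μ →
      ∀ (ε : Ω → ℝ), IsRademacherRV μ ε →
      ∀ (p : ℕ) (α β σ t₁ t₂ : ℝ), p.Prime → 0 ≤ α → 0 ≤ β →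
        100 * (1 + max (α ^ 2) (β ^ 2)) ≤ (p : ℝ) → |σ| ≤ 1 / Real.log p →
      ∃ E : ℝ,
        |E| ≤ C * max (max α β) (max (α ^ 3) (β ^ 3)) / (p : ℝ) ^ (3 / 2 + 3 * σ) ∧
        ∫ ω, ‖1 + (ε ω : ℂ) *
                (p : ℂ) ^ (-(((1 / 2 + σ : ℝ) : ℂ) + Complex.I * (t₁ : ℂ)))‖ ^ (2 * α) *
              ‖1 + (ε ω : ℂ) *
                (p : ℂ) ^ (-(((1 / 2 + σ : ℝ) : ℂ) + Complex.I * (t₂ : ℂ)))‖ ^ (2 * β) ∂μ =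
          Real.exp
            ((α ^ 2 + β ^ 2 + (α ^ 2 - α) * Real.cos (2 * t₁ * Real.log p) +
                (β ^ 2 - β) * Real.cos (2 * t₂ * Real.log p) +
                2 * α * β * (Real.cos ((t₁ + t₂) * Real.log p) +
                  Real.cos ((t₁ - t₂) * Real.log p))) / (p : ℝ) ^ (1 + 2 * σ) + E) := by
  refine ⟨10000, by norm_num, fun Ω _ μ _ ε hε p α β σ t₁ t₂ hp hα hβ hp100 hσ => ?_⟩
  rw [hε.integral_comp fun e : ℝ =>
      ‖1 + (e : ℂ) * (p : ℂ) ^ (-(((1 / 2 + σ : ℝ) : ℂ) + Complex.I * t₁))‖ ^ (2 * α) *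
        ‖1 + (e : ℂ) * (p : ℂ) ^ (-(((1 / 2 + σ : ℝ) : ℂ) + Complex.I * t₂))‖ ^ (2 * β)]
  simp only [norm_one_add_mul_natCast_cpow_neg_rpow hp.pos, one_mul, neg_one_mul, one_pow,
    neg_one_sq]
  have hp1 : (1 : ℝ) < p := by exact_mod_cast hp.one_lt
  set r := ((p : ℝ) ^ (1 / 2 + σ))⁻¹ with hr
  have hpow : ∀ (n : ℕ) (a : ℝ), a = (1 / 2 + σ) * n → (p : ℝ) ^ a = (r ^ n)⁻¹ := by
    rintro n a rfl
    rw [rpow_mul_natCast (by positivity), hr, inv_pow, inv_inv]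
  have hsmall : ∀ x : ℝ, 0 ≤ x → 100 * x ^ 2 ≤ p → r * x ≤ 3 / 10 := fun _ =>
    inv_rpow_half_add_mul_le hp1 hσ
  have hr1 : r ≤ 3 / 10 := by
    simpa using hsmall 1 zero_le_one (by nlinarith [le_max_left (α ^ 2) (β ^ 2)])
  obtain ⟨E, hE, heq⟩ := two_point_average_eq_exp hα hβ (abs_cos_le_one _) (abs_cos_le_one _)
    (by positivity) hr1 (hsmall α hα (by nlinarith [le_max_left (α ^ 2) (β ^ 2)]))
    (hsmall β hβ (by nlinarith [le_max_right (α ^ 2) (β ^ 2)]))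
  refine ⟨E, ?_, ?_⟩
  · rw [hpow 3 _ (by push_cast; ring), div_inv_eq_mul]
    calc |E| ≤ 1000 * ((α + β) + (α + β) ^ 3) * r ^ 3 := hE
      _ ≤ 1000 * (10 * max (max α β) (max (α ^ 3) (β ^ 3))) * r ^ 3 := by
          gcongr; exact add_add_pow_three_le_max hα hβ
      _ = _ := by ring
  · rw [heq, two_point_exponent_eq, hpow 2 _ (by push_cast; ring), div_inv_eq_mul, mul_comm]
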